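/- arXiv:2505.04929 — 2 statements merged into one kernel-verified Lean document; each statement's English description precedes it below -/
import Mathlib

section
/- For all integers n ≥ 3 and 2 ≤ k ≤ (n choose 2), writing N = (n choose 2), the following chain of strict/nonstrict inequalities holds: M(k,n) ≤ M^L(k,N) < √(2kN) < √k · n. -/
/-- Number of edges of a finite simple graph. -/
noncomputable def edgeCnt {V : Type} [Fintype V] (G : SimpleGraph V) : ℕ :=
  G.edgeSet.ncard

/-- Number of edges of `G` with both endpoints in `X`. -/
noncomputable def inducedEdgeCnt {V : Type} [Fintype V] (G : SimpleGraph V) (X : Finset V) : ℕ :=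
  {e : Sym2 V | e ∈ G.edgeSet ∧ ∀ v ∈ e, v ∈ X}.ncard

/-- Maximum average degree of a finite simple graph. -/
noncomputable def Mad {V : Type} [Fintype V] (G : SimpleGraph V) : ℝ :=
  sSup {d : ℝ | ∃ X : Finset V, X.Nonempty ∧ d = 2 * (inducedEdgeCnt G X : ℝ) / (X.card : ℝ)}

/-- A `k`-decomposition of the complete graph `K_n`. -/
def IsKDecomp {k n : ℕ} (G : Fin k → SimpleGraph (Fin n)) : Prop :=
  (∀ i j, i ≠ j → Disjoint (G i).edgeSet (G j).edgeSet) ∧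
  (⋃ i, (G i).edgeSet) = (⊤ : SimpleGraph (Fin n)).edgeSet

/-- `M(k,n)`: maximum of `Mad(G_1)+…+Mad(G_k)` over all `k`-decompositions of `K_n`. -/
noncomputable def MSum (k n : ℕ) : ℝ :=
  sSup {s : ℝ | ∃ G : Fin k → SimpleGraph (Fin n), IsKDecomp G ∧ s = ∑ i, Mad (G i)}

/-- `M^L(k,N)`: maximum of `Mad(G_1)+…+Mad(G_k)` over all lists of `k` finite graphs
with `N` edges in total. -/
noncomputable def MSumL (k N : ℕ) : ℝ :=
  sSup {s : ℝ | ∃ (V : Fin k → Type) (hV : ∀ i, Fintype (V i)) (G : ∀ i, SimpleGraph (V i)),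
    (∑ i, @edgeCnt (V i) (hV i) (G i)) = N ∧ s = ∑ i, @Mad (V i) (hV i) (G i)}

/-- `g(m)`: maximum of `Mad(G)` over all finite simple graphs with exactly `m` edges. -/
noncomputable def gMax (m : ℕ) : ℝ :=
  sSup {d : ℝ | ∃ (V : Type) (hV : Fintype V) (G : SimpleGraph V),
    @edgeCnt V hV G = m ∧ d = @Mad V hV G}

/-- The complete graph on the vertex subset `S` inside `Fin n`. -/
def cliqueOn {n : ℕ} (S : Finset (Fin n)) : SimpleGraph (Fin n) :=
  SimpleGraph.fromRel (fun a b => a ∈ S ∧ b ∈ S)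

lemma two_choose_two (x : ℕ) : 2 * x.choose 2 = x * (x - 1) := by
  cases x with
  | zero => rfl
  | succ m =>
    have h : 2 ∣ (m + 1) * m := by
      rw [mul_comm]; exact (Nat.even_mul_succ_self m).two_dvd
    rw [Nat.choose_two_right, Nat.succ_sub_one, Nat.mul_div_cancel' h]

lemma ncard_top_edgeSet (W : Type) [Fintype W] :
    (⊤ : SimpleGraph W).edgeSet.ncard = (Fintype.card W).choose 2 := by
  classical
  rw [SimpleGraph.edgeSet_top, ← Nat.card_coe_set_eq, Nat.card_eq_fintype_card,
    ← Sym2.card_subtype_not_diag]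
  congr 1

lemma inducedEdgeCnt_le_edgeCnt {V : Type} [Fintype V] (G : SimpleGraph V) (X : Finset V) :
    inducedEdgeCnt G X ≤ edgeCnt G :=
  Set.ncard_le_ncard (fun _ he => he.1) (Set.toFinite _)

lemma inducedEdgeCnt_le_choose {V : Type} [Fintype V] (G : SimpleGraph V) (X : Finset V) :
    inducedEdgeCnt G X ≤ X.card.choose 2 := by
  classical
  have hsub : {e : Sym2 V | e ∈ G.edgeSet ∧ ∀ v ∈ e, v ∈ X} ⊆
      Sym2.map (Subtype.val : ↥X → V) '' (⊤ : SimpleGraph ↥X).edgeSet := by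
    rintro e ⟨he, hX⟩
    induction e with
    | _ a b =>
      have hab : G.Adj a b := he
      have ha : a ∈ X := hX a (Sym2.mem_mk_left a b)
      have hb : b ∈ X := hX b (Sym2.mem_mk_right a b)
      refine ⟨s(⟨a, ha⟩, ⟨b, hb⟩), ?_, rfl⟩
      simp [Subtype.ext_iff]
      exact hab.ne
  calc inducedEdgeCnt G X ≤ (Sym2.map (Subtype.val : ↥X → V) ''
        (⊤ : SimpleGraph ↥X).edgeSet).ncard := Set.ncard_le_ncard hsub (Set.toFinite _)
    _ ≤ (⊤ : SimpleGraph ↥X).edgeSet.ncard := Set.ncard_image_le (Set.toFinite _)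
    _ = (Fintype.card ↥X).choose 2 := ncard_top_edgeSet _
    _ = X.card.choose 2 := by rw [Fintype.card_coe]

lemma mad_nonneg {V : Type} [Fintype V] (G : SimpleGraph V) : 0 ≤ Mad G := by
  apply Real.sSup_nonneg
  rintro d ⟨X, hX, rfl⟩
  positivity

lemma mad_key {V : Type} [Fintype V] (G : SimpleGraph V) :
    Mad G ^ 2 + Mad G ≤ 2 * (edgeCnt G : ℝ) := by
  set m : ℝ := (edgeCnt G : ℝ) with hm
  have hm0 : 0 ≤ m := Nat.cast_nonneg _
  set q : ℝ := Real.sqrt (1 + 8 * m) with hq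
  have hq2 : q ^ 2 = 1 + 8 * m := Real.sq_sqrt (by linarith)
  have hq1 : 1 ≤ q := by
    rw [hq]
    have : Real.sqrt 1 ≤ Real.sqrt (1 + 8 * m) := Real.sqrt_le_sqrt (by linarith)
    simpa using this
  set r : ℝ := (q - 1) / 2 with hr
  have hr0 : 0 ≤ r := by rw [hr]; linarith
  have hrr : r ^ 2 + r = 2 * m := by rw [hr]; nlinarith [hq2]
  have hMad : Mad G ≤ r := by
    apply Real.sSup_le _ hr0
    rintro d ⟨X, hXne, rfl⟩
    have hx1 : (1 : ℝ) ≤ (X.card : ℝ) := by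
      exact_mod_cast Finset.card_pos.mpr hXne
    set x : ℝ := (X.card : ℝ) with hxd
    set i : ℝ := (inducedEdgeCnt G X : ℝ) with hid
    have hi0 : 0 ≤ i := Nat.cast_nonneg _
    have him : 2 * i ≤ 2 * m := by
      have : (inducedEdgeCnt G X : ℝ) ≤ (edgeCnt G : ℝ) :=
        Nat.cast_le.mpr (inducedEdgeCnt_le_edgeCnt G X)
      rw [hid, hm]; linarith
    have hix : 2 * i ≤ x * (x - 1) := by
      have h1 : 2 * inducedEdgeCnt G X ≤ X.card * (X.card - 1) := by
        rw [← two_choose_two]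
        exact Nat.mul_le_mul_left 2 (inducedEdgeCnt_le_choose G X)
      have hc1 : 1 ≤ X.card := Finset.card_pos.mpr hXne
      rw [hid, hxd]
      calc (2 * (inducedEdgeCnt G X : ℝ)) = ((2 * inducedEdgeCnt G X : ℕ) : ℝ) := by
            push_cast; ring
        _ ≤ ((X.card * (X.card - 1) : ℕ) : ℝ) := Nat.cast_le.mpr h1
        _ = (X.card : ℝ) * ((X.card : ℝ) - 1) := by
            push_cast [Nat.cast_sub hc1]; ring
    set d : ℝ := 2 * i / x with hd
    have hxne : x ≠ 0 := by linarith
    have hdx : d * x = 2 * i := by rw [hd]; field_simp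
    have hd0 : 0 ≤ d := by rw [hd]; positivity
    have hdle : d ≤ x - 1 := by
      rw [hd, div_le_iff₀ (by linarith : (0:ℝ) < x)]
      linarith [hix]
    have hkey : d ^ 2 + d ≤ 2 * m := by nlinarith [hdx, him, hdle, hd0]
    nlinarith [hkey, hrr, hr0, hd0]
  nlinarith [hMad, mad_nonneg G, hr0, hrr]

lemma msumL_elem_le (k N : ℕ) (hk2 : 2 ≤ k) (hN : 3 ≤ N) (s : ℝ)
    (hs : s ∈ {s : ℝ | ∃ (V : Fin k → Type) (hV : ∀ i, Fintype (V i))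
      (G : ∀ i, SimpleGraph (V i)),
      (∑ i, @edgeCnt (V i) (hV i) (G i)) = N ∧ s = ∑ i, @Mad (V i) (hV i) (G i)}) :
    s ≤ Real.sqrt (2 * k * N) - 1/2 := by
  obtain ⟨V, hV, G, hsum, rfl⟩ := hs
  set d : Fin k → ℝ := fun i => @Mad (V i) (hV i) (G i) with hd
  have hd0 : ∀ i, 0 ≤ d i := fun i => @mad_nonneg _ (hV i) (G i)
  have hsum2 : ∑ i, (d i) ^ 2 + ∑ i, d i ≤ 2 * N := by
    have h1 : ∀ i, d i ^ 2 + d i ≤ 2 * (@edgeCnt (V i) (hV i) (G i) : ℝ) :=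
      fun i => @mad_key _ (hV i) (G i)
    have h2 : ∑ i, ((d i) ^ 2 + d i) ≤ ∑ i, 2 * (@edgeCnt (V i) (hV i) (G i) : ℝ) :=
      Finset.sum_le_sum fun i _ => h1 i
    have h3 : ∑ i, 2 * (@edgeCnt (V i) (hV i) (G i) : ℝ) = 2 * N := by
      rw [← Finset.mul_sum, ← Nat.cast_sum, hsum]
    rw [Finset.sum_add_distrib] at h2
    linarith [h2, h3.le, h3.ge]
  set S : ℝ := ∑ i, d i with hS
  have hS0 : 0 ≤ S := Finset.sum_nonneg fun i _ => hd0 i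
  have hCS : S ^ 2 ≤ k * ∑ i, (d i) ^ 2 := by
    have := sq_sum_le_card_mul_sum_sq (s := (Finset.univ : Finset (Fin k))) (f := d)
    simpa using this
  have hmain : S ^ 2 + k * S ≤ 2 * k * N := by nlinarith [hCS, hsum2, hk2]
  set t : ℝ := Real.sqrt (2 * k * N) with ht
  have ht2 : t ^ 2 = 2 * k * N := Real.sq_sqrt (by positivity)
  have ht0 : 0 ≤ t := Real.sqrt_nonneg _
  have ht3 : 3 ≤ t := by
    by_contra h
    push_neg at h
    have h9 : t ^ 2 < 9 := by nlinarith [ht0]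
    rw [ht2] at h9
    have hk2' : (2:ℝ) ≤ k := by exact_mod_cast hk2
    have hN' : (3:ℝ) ≤ N := by exact_mod_cast hN
    nlinarith
  have hk2' : (2:ℝ) ≤ k := by exact_mod_cast hk2
  by_contra hcon
  push_neg at hcon
  nlinarith [hmain, ht2, ht3, hS0, hk2', mul_le_mul_of_nonneg_right hk2' hS0]

lemma decomp_sum_edges {k n : ℕ} (G : Fin k → SimpleGraph (Fin n)) (h : IsKDecomp G) :
    ∑ i, edgeCnt (G i) = Nat.choose n 2 := by
  classical
  obtain ⟨hdisj, hunion⟩ := h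
  have hfin : ∀ i, ((G i).edgeSet).Finite := fun i => Set.toFinite _
  set F : Fin k → Finset (Sym2 (Fin n)) := fun i => (hfin i).toFinset with hF
  have h1 : ∀ i, edgeCnt (G i) = (F i).card := fun i =>
    Set.ncard_eq_toFinset_card _ (hfin i)
  have hdisjF : ∀ i ∈ Finset.univ, ∀ j ∈ Finset.univ, i ≠ j → Disjoint (F i) (F j) := by
    intro i _ j _ hij
    rw [hF]
    simp only [Set.Finite.disjoint_toFinset]
    exact hdisj i j hij
  have h2 : (Finset.univ.biUnion F).card = ∑ i, (F i).card := Finset.card_biUnion hdisjF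
  have htopfin : ((⊤ : SimpleGraph (Fin n)).edgeSet).Finite := Set.toFinite _
  have h3 : Finset.univ.biUnion F = htopfin.toFinset := by
    ext e
    simp only [Finset.mem_biUnion, Finset.mem_univ, true_and, hF,
      Set.Finite.mem_toFinset, ← hunion, Set.mem_iUnion]
  have h4 : htopfin.toFinset.card = (⊤ : SimpleGraph (Fin n)).edgeSet.ncard :=
    (Set.ncard_eq_toFinset_card _ htopfin).symm
  calc ∑ i, edgeCnt (G i) = ∑ i, (F i).card := Finset.sum_congr rfl fun i _ => h1 i
    _ = (Finset.univ.biUnion F).card := h2.symm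
    _ = (⊤ : SimpleGraph (Fin n)).edgeSet.ncard := by rw [h3, h4]
    _ = Nat.choose n 2 := by rw [ncard_top_edgeSet]; simp

lemma edgeCnt_bot {V : Type} [Fintype V] : edgeCnt (⊥ : SimpleGraph V) = 0 := by
  simp [edgeCnt]

lemma witness_sum_edges (n k : ℕ) (hk0 : 0 < k) :
    ∑ i : Fin k, edgeCnt (if i = (⟨0, hk0⟩ : Fin k) then (⊤ : SimpleGraph (Fin n)) else ⊥)
      = Nat.choose n 2 := by
  rw [Finset.sum_eq_single (⟨0, hk0⟩ : Fin k)]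
  · rw [if_pos rfl]
    show (⊤ : SimpleGraph (Fin n)).edgeSet.ncard = _
    rw [ncard_top_edgeSet, Fintype.card_fin]
  · intro i _ hi
    simp [hi, edgeCnt_bot]
  · simp

/-- the chain `M(k,n) ≤ M^L(k,N) < √(2kN) < √k·n` for `N = C(n,2)`. -/
theorem madSum_sqrt_chain (n k : ℕ) (hn : 3 ≤ n) (hk2 : 2 ≤ k) (hk : k ≤ Nat.choose n 2) :
    MSum k n ≤ MSumL k (Nat.choose n 2) ∧
    MSumL k (Nat.choose n 2) < Real.sqrt (2 * (k : ℝ) * (Nat.choose n 2 : ℝ)) ∧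
    Real.sqrt (2 * (k : ℝ) * (Nat.choose n 2 : ℝ)) < Real.sqrt (k : ℝ) * n := by
  set N := Nat.choose n 2 with hNdef
  have hN3 : 3 ≤ N := by
    calc 3 = Nat.choose 3 2 := by decide
      _ ≤ Nat.choose n 2 := Nat.choose_le_choose 2 hn
  set SL := {s : ℝ | ∃ (V : Fin k → Type) (hV : ∀ i, Fintype (V i))
      (G : ∀ i, SimpleGraph (V i)),
      (∑ i, @edgeCnt (V i) (hV i) (G i)) = N ∧ s = ∑ i, @Mad (V i) (hV i) (G i)} with hSL
  have hbound : ∀ s ∈ SL, s ≤ Real.sqrt (2 * k * N) - 1/2 :=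
    fun s hs => msumL_elem_le k N hk2 hN3 s hs
  have hbdd : BddAbove SL := ⟨Real.sqrt (2 * k * N) - 1/2, hbound⟩
  have ht3 : (3 : ℝ) ≤ Real.sqrt (2 * k * N) := by
    have h9 : (9 : ℝ) ≤ 2 * k * N := by
      have hk2' : (2:ℝ) ≤ k := by exact_mod_cast hk2
      have hN' : (3:ℝ) ≤ N := by exact_mod_cast hN3
      nlinarith
    calc (3:ℝ) = Real.sqrt 9 := by
          rw [show (9:ℝ) = 3^2 by norm_num, Real.sqrt_sq (by norm_num)]
      _ ≤ Real.sqrt (2 * k * N) := Real.sqrt_le_sqrt h9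
  have hMSumL_def : MSumL k N = sSup SL := rfl
  have hpart2 : MSumL k N < Real.sqrt (2 * (k : ℝ) * (N : ℝ)) := by
    rw [hMSumL_def]
    have hle : sSup SL ≤ Real.sqrt (2 * k * N) - 1/2 :=
      Real.sSup_le hbound (by linarith)
    linarith
  have hk0 : 0 < k := by omega
  have hMSumL_nonneg : 0 ≤ MSumL k N := by
    rw [hMSumL_def]
    apply Real.sSup_nonneg'
    refine ⟨∑ i : Fin k,
      Mad (if i = (⟨0, hk0⟩ : Fin k) then (⊤ : SimpleGraph (Fin n)) else ⊥), ?_, ?_⟩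
    · exact ⟨fun _ => Fin n, fun _ => inferInstance,
        fun i => if i = (⟨0, hk0⟩ : Fin k) then (⊤ : SimpleGraph (Fin n)) else ⊥,
        witness_sum_edges n k hk0, rfl⟩
    · exact Finset.sum_nonneg fun i _ => mad_nonneg _
  refine ⟨?_, hpart2, ?_⟩
  · apply Real.sSup_le _ hMSumL_nonneg
    rintro s ⟨G, hdecomp, rfl⟩
    have hmem : (∑ i, Mad (G i)) ∈ SL :=
      ⟨fun _ => Fin n, fun _ => inferInstance, G, decomp_sum_edges G hdecomp, rfl⟩
    exact le_csSup hbdd hmem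
  · have h2c : (2 * N : ℝ) = (n : ℝ) * ((n : ℝ) - 1) := by
      have hh : 2 * N = n * (n - 1) := by rw [hNdef]; exact two_choose_two n
      calc (2 * N : ℝ) = ((2 * N : ℕ) : ℝ) := by push_cast; ring
        _ = ((n * (n-1) : ℕ) : ℝ) := by rw [hh]
        _ = (n : ℝ) * ((n:ℝ) - 1) := by push_cast [Nat.cast_sub (by omega : 1 ≤ n)]; ring
    have hlt : 2 * (k : ℝ) * (N : ℝ) < (k : ℝ) * (n : ℝ) ^ 2 := by
      have hk' : (0:ℝ) < k := by exact_mod_cast hk0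
      have hn' : (0:ℝ) < n := by exact_mod_cast (by omega : 0 < n)
      nlinarith [h2c, hk', hn']
    calc Real.sqrt (2 * (k : ℝ) * (N : ℝ))
        < Real.sqrt ((k : ℝ) * (n : ℝ) ^ 2) := Real.sqrt_lt_sqrt (by positivity) hlt
      _ = Real.sqrt (k : ℝ) * n := by
          rw [Real.sqrt_mul (by positivity), Real.sqrt_sq (by positivity)]
end

section
/- For all integers n ≥ 3 and k ≥ 1: (i) if k ≤ (n choose 2), then M(k, n+1) ≥ M(k,n) + 1; (ii) if k < (n choose 2), then M(k+1, n) ≥ M(k,n) + 1/3. -/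
/-!
(i) Embed a decomposition of `K_n` into `K_{n+1}` and give the star at the new vertex to one part:
adding the new vertex to a densest set of that part raises its average degree by at least one,
and the other parts keep their `Mad`.
(ii) As `k < n.choose 2`, some part has two edges. Moving a well-chosen edge of it into a new part
costs that part at most `2 / 3`, and the new part has `Mad = 1`.
-/

open Finset SimpleGraph Function

section InducedEdges

variable {V W : Type} [Fintype V] [Fintype W]

lemma inducedEdgeCnt_eq_ncard (G : SimpleGraph V) (X : Finset V) :
    inducedEdgeCnt G X = (G.edgeSet ∩ X.sym2).ncard := by
  simp only [inducedEdgeCnt, ← Finset.mem_sym2_iff]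
  rfl

lemma inducedEdgeCnt_mono {G H : SimpleGraph V} (h : G ≤ H) (X : Finset V) :
    inducedEdgeCnt G X ≤ inducedEdgeCnt H X := by
  simp only [inducedEdgeCnt_eq_ncard]
  exact Set.ncard_le_ncard (Set.inter_subset_inter_left _ (edgeSet_mono h))

lemma inducedEdgeCnt_le_choose_two (G : SimpleGraph V) (X : Finset V) :
    inducedEdgeCnt G X ≤ (#X).choose 2 := by
  classical
  rw [inducedEdgeCnt_eq_ncard, ← Sym2.card_image_offDiag, ← Set.ncard_coe_finset]
  refine Set.ncard_le_ncard ?_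
  rintro e ⟨he, hX⟩
  induction e using Sym2.ind with
  | h a b =>
    rw [Finset.mem_coe, Finset.mk_mem_sym2_iff] at hX
    exact mem_image.mpr ⟨(a, b), mem_offDiag.mpr ⟨hX.1, hX.2, G.ne_of_adj he⟩, rfl⟩

lemma inducedEdgeCnt_map (f : V ↪ W) (G : SimpleGraph V) (X : Finset V) :
    inducedEdgeCnt (G.map f) (X.map f) = inducedEdgeCnt G X := by
  rw [inducedEdgeCnt_eq_ncard, inducedEdgeCnt_eq_ncard, edgeSet_map, Finset.sym2_map,
    Finset.coe_map, ← Set.image_inter f.sym2Map.injective,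
    Set.ncard_image_of_injective _ f.sym2Map.injective]

lemma inducedEdgeCnt_add_card_le_insert [DecidableEq W] {H : SimpleGraph W} {w : W}
    {Y : Finset W} (hw : w ∉ Y) (hadj : ∀ y ∈ Y, H.Adj w y) :
    inducedEdgeCnt H Y + #Y ≤ inducedEdgeCnt H (insert w Y) := by
  have hdisj : Disjoint (H.edgeSet ∩ Y.sym2) (Sym2.mkEmbedding w '' Y) := by
    rw [Set.disjoint_right]
    rintro _ ⟨y, -, rfl⟩ ⟨-, hY⟩
    exact hw (Finset.mem_sym2_iff.mp hY w (Sym2.mem_mk_left w y))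
  have hsub : (H.edgeSet ∩ Y.sym2) ∪ Sym2.mkEmbedding w '' Y ⊆
      H.edgeSet ∩ (insert w Y).sym2 := by
    rintro e (⟨he, hY⟩ | ⟨y, hy, rfl⟩)
    · exact ⟨he, Finset.sym2_mono (Finset.subset_insert w Y) hY⟩
    · exact ⟨hadj y hy, Finset.mk_mem_sym2_iff.mpr
        ⟨Finset.mem_insert_self w Y, Finset.mem_insert_of_mem hy⟩⟩
  rw [inducedEdgeCnt_eq_ncard, inducedEdgeCnt_eq_ncard, ← Set.ncard_coe_finset Y,
    ← Set.ncard_image_of_injective _ (Sym2.mkEmbedding w).injective,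
    ← Set.ncard_union_eq hdisj]
  exact Set.ncard_le_ncard hsub

lemma inducedEdgeCnt_le_deleteEdges_add_one (G : SimpleGraph V) (e : Sym2 V) (X : Finset V) :
    inducedEdgeCnt G X ≤ inducedEdgeCnt (G.deleteEdges {e}) X + 1 := by
  rw [inducedEdgeCnt_eq_ncard, inducedEdgeCnt_eq_ncard, edgeSet_deleteEdges,
    ← Set.inter_sdiff_right_comm]
  exact (Set.ncard_le_ncard_sdiff_add_ncard _ _ (Set.finite_singleton e)).trans_eq
    (by rw [Set.ncard_singleton])

lemma inducedEdgeCnt_deleteEdges_of_notMem {e : Sym2 V} {X : Finset V} (he : e ∉ X.sym2)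
    (G : SimpleGraph V) : inducedEdgeCnt (G.deleteEdges {e}) X = inducedEdgeCnt G X := by
  rw [inducedEdgeCnt_eq_ncard, inducedEdgeCnt_eq_ncard, edgeSet_deleteEdges,
    ← Set.inter_sdiff_right_comm, Set.sdiff_singleton_eq_self (fun h => he h.2)]

end InducedEdges

section Mad

variable {V W : Type} [Fintype V] [Fintype W]

lemma finite_avgDegrees (G : SimpleGraph V) :
    {d : ℝ | ∃ X : Finset V, X.Nonempty ∧ d = 2 * (inducedEdgeCnt G X : ℝ) / #X}.Finite :=
  (Set.finite_range fun X : Finset V => 2 * (inducedEdgeCnt G X : ℝ) / (#X : ℝ)).subset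
    (by rintro _ ⟨X, -, rfl⟩; exact ⟨X, rfl⟩)

lemma le_Mad (G : SimpleGraph V) {X : Finset V} (hX : X.Nonempty) :
    2 * (inducedEdgeCnt G X : ℝ) / #X ≤ Mad G :=
  le_csSup (finite_avgDegrees G).bddAbove ⟨X, hX, rfl⟩

lemma exists_eq_Mad [Nonempty V] (G : SimpleGraph V) :
    ∃ X : Finset V, X.Nonempty ∧ Mad G = 2 * (inducedEdgeCnt G X : ℝ) / #X := by
  refine Set.Nonempty.csSup_mem ?_ (finite_avgDegrees G)
  exact ⟨_, Finset.univ, Finset.univ_nonempty, rfl⟩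

lemma Mad_nonneg (G : SimpleGraph V) : 0 ≤ Mad G :=
  Real.sSup_nonneg (by rintro _ ⟨X, -, rfl⟩; positivity)

lemma Mad_le_Mad_map (f : V ↪ W) (G : SimpleGraph V) : Mad G ≤ Mad (G.map f) := by
  refine Real.sSup_le ?_ (Mad_nonneg _)
  rintro _ ⟨X, hX, rfl⟩
  rw [← inducedEdgeCnt_map f, ← Finset.card_map f]
  exact le_Mad _ hX.map

lemma one_le_Mad {G : SimpleGraph V} (hG : G.edgeSet.Nonempty) : 1 ≤ Mad G := by
  classical
  obtain ⟨e, he⟩ := hG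
  induction e using Sym2.ind with
  | h a b =>
    have hcnt : 1 ≤ inducedEdgeCnt G {a, b} := by
      rw [inducedEdgeCnt_eq_ncard]
      exact (Set.ncard_pos (Set.toFinite _)).mpr ⟨s(a, b), he, by simp⟩
    have hMad := le_Mad G (X := {a, b}) (Finset.insert_nonempty _ _)
    rw [Finset.card_pair (G.ne_of_adj he)] at hMad
    have : (1 : ℝ) ≤ inducedEdgeCnt G {a, b} := by exact_mod_cast hcnt
    linarith

/-- The cone over a densest set `X` gains `#X` edges and one vertex, which raises `2 e / #X` by at
least one because `2 e ≤ #X (#X - 1)`. -/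
lemma Mad_add_one_le_of_cone [Nonempty V] (f : V ↪ W) {G : SimpleGraph V}
    {H : SimpleGraph W} {w : W} (hw : ∀ v, f v ≠ w) (hGH : G.map f ≤ H)
    (hadj : ∀ v, H.Adj w (f v)) : Mad G + 1 ≤ Mad H := by
  classical
  obtain ⟨X, hX, hMad⟩ := exists_eq_Mad G
  have hwX : w ∉ X.map f := by simpa using fun v _ => hw v
  have hcnt : inducedEdgeCnt G X + #X ≤ inducedEdgeCnt H (insert w (X.map f)) :=
    calc inducedEdgeCnt G X + #X = inducedEdgeCnt (G.map f) (X.map f) + #(X.map f) := by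
          rw [inducedEdgeCnt_map, Finset.card_map]
      _ ≤ inducedEdgeCnt H (X.map f) + #(X.map f) := by
          gcongr; exact inducedEdgeCnt_mono hGH _
      _ ≤ _ := inducedEdgeCnt_add_card_le_insert hwX (by simpa using fun v _ => hadj v)
  have hchoose : (inducedEdgeCnt G X : ℝ) ≤ #X * (#X - 1) / 2 := by
    rw [← Nat.cast_choose_two]
    exact_mod_cast inducedEdgeCnt_le_choose_two G X
  have hx : (0 : ℝ) < #X := by exact_mod_cast hX.card_pos
  calc Mad G + 1 = 2 * (inducedEdgeCnt G X : ℝ) / #X + 1 := by rw [hMad]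
    _ ≤ 2 * ((inducedEdgeCnt G X : ℝ) + #X) / (#X + 1) := by
        rw [div_add_one hx.ne', div_le_div_iff₀ hx (by positivity)]
        nlinarith
    _ ≤ 2 * (inducedEdgeCnt H (insert w (X.map f)) : ℝ) / #(insert w (X.map f)) := by
        rw [Finset.card_insert_of_notMem hwX, Finset.card_map]
        push_cast
        gcongr
        exact_mod_cast hcnt
    _ ≤ Mad H := le_Mad H (Finset.insert_nonempty _ _)

/-- If a densest set `X` misses an edge, deleting that edge keeps the density of `X`; otherwise
`X` spans at least two edges, hence at least three vertices, and deleting any edge costs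
`2 / #X ≤ 2 / 3`. -/
lemma exists_Mad_sub_le_Mad_deleteEdges {G : SimpleGraph V} (hG : 2 ≤ G.edgeSet.ncard) :
    ∃ e ∈ G.edgeSet, Mad G - 2 / 3 ≤ Mad (G.deleteEdges {e}) := by
  classical
  obtain ⟨e₀, he₀⟩ := Set.nonempty_of_ncard_ne_zero (by omega : G.edgeSet.ncard ≠ 0)
  have : Nonempty V := ⟨e₀.out.1⟩
  obtain ⟨X, hX, hMad⟩ := exists_eq_Mad G
  by_cases hout : ∃ e ∈ G.edgeSet, e ∉ X.sym2
  · obtain ⟨e, he, heX⟩ := hout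
    refine ⟨e, he, ?_⟩
    have hle := le_Mad (G.deleteEdges {e}) hX
    rw [inducedEdgeCnt_deleteEdges_of_notMem heX] at hle
    linarith
  push Not at hout
  have hall : inducedEdgeCnt G X = G.edgeSet.ncard := by
    rw [inducedEdgeCnt_eq_ncard, Set.inter_eq_left.mpr hout]
  have hX3 : 3 ≤ #X := by
    by_contra! h
    have := (inducedEdgeCnt_le_choose_two G X).trans
      (Nat.choose_le_choose 2 (Nat.le_of_lt_succ h))
    rw [Nat.choose_self] at this
    omega
  refine ⟨e₀, he₀, ?_⟩
  have hdel : (inducedEdgeCnt G X : ℝ) ≤ inducedEdgeCnt (G.deleteEdges {e₀}) X + 1 := by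
    exact_mod_cast inducedEdgeCnt_le_deleteEdges_add_one G e₀ X
  have hx : (3 : ℝ) ≤ #X := by exact_mod_cast hX3
  calc Mad G - 2 / 3 ≤ Mad G - 2 / #X := by gcongr
    _ = 2 * ((inducedEdgeCnt G X : ℝ) - 1) / #X := by rw [hMad]; ring
    _ ≤ 2 * (inducedEdgeCnt (G.deleteEdges {e₀}) X : ℝ) / #X := by gcongr; linarith
    _ ≤ Mad (G.deleteEdges {e₀}) := le_Mad _ hX

end Mad

section LatticeFamilies

variable {ι α : Type*}

lemma pairwise_disjoint_update [Lattice α] [OrderBot α] [DecidableEq ι] {F : ι → α}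
    (hF : Pairwise (Disjoint on F)) {i₀ : ι} {x : α} (hx : ∀ j ≠ i₀, Disjoint x (F j)) :
    Pairwise (Disjoint on update F i₀ x) := by
  intro i j hij
  rcases eq_or_ne i i₀ with rfl | hi
  · simpa [onFun, update_of_ne hij.symm] using hx j hij.symm
  rcases eq_or_ne j i₀ with rfl | hj
  · simpa [onFun, update_of_ne hij] using (hx i hij).symm
  simpa [onFun, update_of_ne hi, update_of_ne hj] using hF hij

lemma pairwise_disjoint_fin_cons [Lattice α] [OrderBot α] {k : ℕ} {x : α} {F : Fin k → α}
    (hx : ∀ i, Disjoint x (F i)) (hF : Pairwise (Disjoint on F)) :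
    Pairwise (Disjoint on (Fin.cons x F : Fin (k + 1) → α)) := by
  intro i j hij
  induction i using Fin.cases <;> induction j using Fin.cases
  · exact absurd rfl hij
  · simpa [onFun] using hx _
  · simpa [onFun] using (hx _).symm
  · simpa [onFun] using hF fun h => hij (congrArg Fin.succ h)

lemma iSup_update_sup [CompleteLattice α] [DecidableEq ι] (F : ι → α) (i₀ : ι) (x : α) :
    ⨆ i, update F i₀ (F i₀ ⊔ x) i = (⨆ i, F i) ⊔ x := by
  apply le_antisymm
  · refine iSup_le fun i => ?_
    rcases eq_or_ne i i₀ with rfl | hi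
    · simpa using sup_le_sup_right (le_iSup F i) x
    · simpa [hi] using le_sup_of_le_left (le_iSup F i)
  · refine sup_le (iSup_mono fun i => ?_) (le_iSup_of_le i₀ (by simp))
    rcases eq_or_ne i i₀ with rfl | hi
    · simp
    · simp [hi]

variable {M : Type*} [AddCommMonoid M] [PartialOrder M] [IsOrderedAddMonoid M]

lemma sum_add_le_sum [Fintype ι] {f g : ι → M} {c : M} (i₀ : ι)
    (h₀ : f i₀ + c ≤ g i₀) (h : ∀ i ≠ i₀, f i ≤ g i) :
    ∑ i, f i + c ≤ ∑ i, g i := by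
  classical
  rw [← Finset.add_sum_erase _ f (Finset.mem_univ i₀),
    ← Finset.add_sum_erase _ g (Finset.mem_univ i₀), add_right_comm]
  exact add_le_add h₀ (Finset.sum_le_sum fun i hi => h i (Finset.ne_of_mem_erase hi))

end LatticeFamilies

namespace SimpleGraph

variable {ι V W : Type*}

lemma disjoint_map_iff (f : V ↪ W) {G H : SimpleGraph V} :
    Disjoint (G.map f) (H.map f) ↔ Disjoint G H := by
  rw [← disjoint_edgeSet, ← disjoint_edgeSet, edgeSet_map, edgeSet_map,
    Set.disjoint_image_iff f.sym2Map.injective]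

lemma map_iSup (f : V ↪ W) (G : ι → SimpleGraph V) : (⨆ i, G i).map f = ⨆ i, (G i).map f :=
  GaloisConnection.l_iSup fun G H => map_le_iff_le_comap f G H

lemma top_sdiff_map_top_adj (f : V ↪ W) {w : W} (hw : ∀ v, f v ≠ w) (v : V) :
    ((⊤ : SimpleGraph W) \ (⊤ : SimpleGraph V).map f).Adj w (f v) := by
  simp only [sdiff_adj, top_adj, map_adj, not_exists, not_and]
  exact ⟨(hw v).symm, fun a _ _ ha _ => hw a ha⟩

def IsDecomposition (G : ι → SimpleGraph V) : Prop :=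
  Pairwise (Disjoint on G) ∧ ⨆ i, G i = ⊤

lemma isDecomposition_ite [DecidableEq ι] (i₀ : ι) :
    IsDecomposition fun i => if i = i₀ then (⊤ : SimpleGraph V) else ⊥ := by
  refine ⟨fun i j hij => ?_, top_le_iff.1 (le_iSup_of_le i₀ (by simp))⟩
  rcases eq_or_ne i i₀ with rfl | hi
  · simp [onFun, hij.symm]
  · simp [onFun, hi]

namespace IsDecomposition

variable {G : ι → SimpleGraph V}

lemma map_update [DecidableEq ι] (hG : IsDecomposition G) (f : V ↪ W) (i₀ : ι) :
    IsDecomposition (update (fun i => (G i).map f) i₀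
      ((G i₀).map f ⊔ ((⊤ : SimpleGraph W) \ (⊤ : SimpleGraph V).map f))) := by
  refine ⟨pairwise_disjoint_update (fun i j hij => (disjoint_map_iff f).2 (hG.1 hij))
    fun j hj => disjoint_sup_left.2 ⟨(disjoint_map_iff f).2 (hG.1 hj.symm),
      disjoint_sdiff_self_left.mono_right (map_monotone f le_top)⟩, ?_⟩
  rw [iSup_update_sup (fun i => (G i).map f), ← map_iSup, hG.2, sup_sdiff_cancel_right le_top]

lemma cons_update {k : ℕ} {G : Fin k → SimpleGraph V} (hG : IsDecomposition G) {i₀ : Fin k}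
    {A B : SimpleGraph V} (hAB : Disjoint A B) (hsup : A ⊔ B = G i₀) :
    IsDecomposition (Fin.cons B (update G i₀ A) : Fin (k + 1) → SimpleGraph V) := by
  have hA : A ≤ G i₀ := hsup ▸ le_sup_left
  have hB : B ≤ G i₀ := hsup ▸ le_sup_right
  refine ⟨pairwise_disjoint_fin_cons (fun i => ?_)
    (pairwise_disjoint_update hG.1 fun j hj => (hG.1 hj.symm).mono_left hA), ?_⟩
  · rcases eq_or_ne i i₀ with rfl | hi
    · simpa using hAB.symm
    · simpa [hi] using (hG.1 hi.symm).mono_left hB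
  refine top_le_iff.1 (hG.2 ▸ iSup_le fun i => ?_)
  rcases eq_or_ne i i₀ with rfl | hi
  · rw [← hsup]
    exact sup_le (le_iSup_of_le i.succ (by simp)) (le_iSup_of_le 0 (by simp))
  · exact le_iSup_of_le i.succ (by simp [hi])

lemma choose_two_le_sum_ncard_edgeSet [Fintype ι] [Fintype V] (hG : IsDecomposition G) :
    (Fintype.card V).choose 2 ≤ ∑ i, (G i).edgeSet.ncard := by
  classical
  calc (Fintype.card V).choose 2 = (⊤ : SimpleGraph V).edgeSet.ncard := by
        rw [← card_edgeFinset_top_eq_card_choose_two, ← coe_edgeFinset, Set.ncard_coe_finset]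
    _ = (⋃ i, (G i).edgeSet).ncard := by rw [← edgeSet_iSup, hG.2]
    _ ≤ ∑ i, (G i).edgeSet.ncard := Set.ncard_iUnion_le_of_fintype _

end IsDecomposition

end SimpleGraph

lemma isKDecomp_iff {k n : ℕ} {G : Fin k → SimpleGraph (Fin n)} :
    IsKDecomp G ↔ IsDecomposition G := by
  simp only [IsKDecomp, IsDecomposition, disjoint_edgeSet, ← edgeSet_iSup, edgeSet_inj]
  rfl

lemma MSum_add_le_MSum {k n k' n' : ℕ} {c : ℝ} (hk : 0 < k)
    (h : ∀ G : Fin k → SimpleGraph (Fin n), IsDecomposition G →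
      ∃ G' : Fin k' → SimpleGraph (Fin n'), IsDecomposition G' ∧
        ∑ i, Mad (G i) + c ≤ ∑ i, Mad (G' i)) :
    MSum k n + c ≤ MSum k' n' := by
  have hbdd : BddAbove {s : ℝ | ∃ G : Fin k' → SimpleGraph (Fin n'), IsKDecomp G ∧
      s = ∑ i, Mad (G i)} :=
    ((Set.finite_range fun G : Fin k' → SimpleGraph (Fin n') => ∑ i, Mad (G i)).subset
      (by rintro _ ⟨G, -, rfl⟩; exact ⟨G, rfl⟩)).bddAbove
  rw [← le_sub_iff_add_le]
  refine csSup_le ⟨_, _, isKDecomp_iff.2 (isDecomposition_ite ⟨0, hk⟩), rfl⟩ ?_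
  rintro _ ⟨G, hG, rfl⟩
  obtain ⟨G', hG', hle⟩ := h G (isKDecomp_iff.1 hG)
  exact le_sub_iff_add_le.2 (hle.trans (le_csSup hbdd ⟨G', isKDecomp_iff.2 hG', rfl⟩))

theorem MSum_add_one_le_MSum_succ {k n : ℕ} (hk : 0 < k) (hn : 0 < n) :
    MSum k n + 1 ≤ MSum k (n + 1) := by
  have : Nonempty (Fin n) := ⟨⟨0, hn⟩⟩
  have hlast : ∀ v, Fin.castSuccEmb v ≠ Fin.last n := fun v => (Fin.castSucc_lt_last v).ne
  refine MSum_add_le_MSum hk fun G hG => ?_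
  let i₀ : Fin k := ⟨0, hk⟩
  refine ⟨_, hG.map_update Fin.castSuccEmb i₀, sum_add_le_sum i₀ ?_ fun i hi => ?_⟩
  · rw [update_self]
    exact Mad_add_one_le_of_cone Fin.castSuccEmb hlast le_sup_left
      fun v => Or.inr (top_sdiff_map_top_adj _ hlast v)
  · rw [update_of_ne hi]
    exact Mad_le_Mad_map Fin.castSuccEmb (G i)

theorem MSum_add_one_third_le_MSum_succ {k n : ℕ} (hk : 0 < k) (hkn : k < n.choose 2) :
    MSum k n + 1 / 3 ≤ MSum (k + 1) n := by
  refine MSum_add_le_MSum hk fun G hG => ?_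
  obtain ⟨i₀, hi₀⟩ : ∃ i, 2 ≤ (G i).edgeSet.ncard := by
    by_contra! h
    have hsum := hG.choose_two_le_sum_ncard_edgeSet
    have : ∑ i, (G i).edgeSet.ncard ≤ ∑ _i : Fin k, 1 :=
      Finset.sum_le_sum fun i _ => Nat.le_of_lt_succ (h i)
    simp only [Fintype.card_fin, sum_const, card_univ, smul_eq_mul, mul_one] at hsum this
    omega
  obtain ⟨e, he, hMad⟩ := exists_Mad_sub_le_Mad_deleteEdges hi₀
  have hsplit : (G i₀).deleteEdges {e} ⊔ fromEdgeSet {e} = G i₀ :=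
    sdiff_sup_cancel <| (fromEdgeSet_le _).2 <|
      Set.sdiff_subset.trans (Set.singleton_subset_iff.2 he)
  refine ⟨_, hG.cons_update (A := (G i₀).deleteEdges {e}) disjoint_sdiff_self_left hsplit, ?_⟩
  have hnew : 1 ≤ Mad (fromEdgeSet {e} : SimpleGraph (Fin n)) :=
    one_le_Mad ⟨e, by simpa [edgeSet_fromEdgeSet] using (G i₀).not_isDiag_of_mem_edgeSet he⟩
  have hrest := sum_add_le_sum (f := fun i => Mad (G i))
    (g := fun i => Mad (update G i₀ ((G i₀).deleteEdges {e}) i)) (c := -(2 / 3)) i₀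
    (by simpa [sub_eq_add_neg] using hMad) fun i hi => by simp [update_of_ne hi]
  rw [Fin.sum_univ_succ]
  simp only [Fin.cons_zero, Fin.cons_succ]
  linarith

/-- monotonicity of `M(k,n)` in `n` and in `k`. -/
theorem madSum_monotone (n k : ℕ) (hn : 3 ≤ n) (hk : 1 ≤ k) :
    (k ≤ Nat.choose n 2 → MSum k (n + 1) ≥ MSum k n + 1) ∧
    (k < Nat.choose n 2 → MSum (k + 1) n ≥ MSum k n + 1 / 3) :=
  ⟨fun _ => MSum_add_one_le_MSum_succ hk (by omega), MSum_add_one_third_le_MSum_succ hk⟩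
end
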